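/- arXiv:0902.0869 — 3 statements merged into one kernel-verified Lean document; each statement's English description precedes it below -/
import Mathlib

section
/- Let G be a group, H ≤ G a subgroup, A ≤ G a normal subgroup with G/A having no proper finite-index subgroups, and ψ : G → ℤ a homomorphism such that ψ(H ∩ A) ≠ 0 and the quotient map q : G → G/A satisfies q(H) = G/A. Then q(ker ψ ∩ H) = G/A. -/
/-!
Since `ψ(H ∩ A)` is a nontrivial subgroup of `ℤ`, it has finite index, so `M = ψ⁻¹(ψ(H ∩ A))` has
finite index in `G`. Then `M ∩ H` has finite index in `H`, and its image in `G/A` is a finite-index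
subgroup, hence all of `G/A`. Finally every element of `M ∩ H` is a product of an element of
`ker ψ ∩ H` and one of `H ∩ A`, and the latter factor dies in `G/A`.
-/

open Subgroup

theorem Int.addSubgroup_finiteIndex_of_ne_bot {K : AddSubgroup ℤ} (hK : K ≠ ⊥) :
    K.FiniteIndex := by
  obtain ⟨n, hnK, hn⟩ := K.bot_or_exists_ne_zero.resolve_left hK
  have : (AddSubgroup.zmultiples n).FiniteIndex :=
    ⟨by rw [Int.index_zmultiples]; exact Int.natAbs_ne_zero.mpr hn⟩
  exact AddSubgroup.finiteIndex_of_le (AddSubgroup.zmultiples_le_of_mem hnK)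

theorem Subgroup.finiteIndex_of_ne_bot_multiplicative_int {K : Subgroup (Multiplicative ℤ)}
    (hK : K ≠ ⊥) : K.FiniteIndex := by
  obtain ⟨K, rfl⟩ := AddSubgroup.toSubgroup.surjective K
  exact (AddSubgroup.finiteIndex_toSubgroup_iff _).mpr
    (Int.addSubgroup_finiteIndex_of_ne_bot fun h => hK (h ▸ AddSubgroup.toSubgroup.map_bot))

theorem Subgroup.finiteIndex_comap {G N : Type*} [Group G] [Group N] (f : G →* N)
    (K : Subgroup N) [K.FiniteIndex] : (K.comap f).FiniteIndex :=
  ⟨by rw [index_comap]; exact FiniteIndex.index_ne_zero⟩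

theorem Subgroup.finiteIndex_map_of_surjective {G N : Type*} [Group G] [Group N] {f : G →* N}
    (hf : Function.Surjective f) (K : Subgroup G) [K.FiniteIndex] : (K.map f).FiniteIndex :=
  ⟨fun h => FiniteIndex.index_ne_zero (Nat.eq_zero_of_zero_dvd (h ▸ K.index_map_dvd hf))⟩

theorem Subgroup.map_inf_eq_top_of_finiteIndex {G Q : Type*} [Group G] [Group Q] (f : G →* Q)
    (hQ : ∀ J : Subgroup Q, J.FiniteIndex → J = ⊤) {H : Subgroup G} (hH : H.map f = ⊤)
    (M : Subgroup G) [M.FiniteIndex] : (M ⊓ H).map f = ⊤ := by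
  have hsurj : Function.Surjective (f.comp H.subtype) := by
    rw [← MonoidHom.range_eq_top, MonoidHom.range_comp, H.range_subtype, hH]
  rw [← subgroupOf_map_subtype, map_map]
  exact hQ _ (finiteIndex_map_of_surjective hsurj _)

theorem Subgroup.comap_map_inf_le {G N : Type*} [Group G] [Group N] (f : G →* N)
    {L H : Subgroup G} (hLH : L ≤ H) : (L.map f).comap f ⊓ H ≤ L ⊔ (f.ker ⊓ H) := by
  rintro g ⟨⟨l, hl, hfl⟩, hg⟩
  have hquot : l⁻¹ * g ∈ f.ker ⊓ H :=
    ⟨by simp [hfl], H.mul_mem (H.inv_mem (hLH hl)) hg⟩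
  simpa using mul_mem_sup hl hquot

/-- If `A ⊴ G` with `G/A` having no proper finite-index subgroups,
`ψ : G → ℤ` satisfies `ψ(H ∩ A) ≠ 0`, and `H` surjects onto `G/A`, then
`ker ψ ∩ H` still surjects onto `G/A`. -/
theorem stmt8 {G : Type*} [Group G] (H A : Subgroup G) [A.Normal]
    (hGA : ∀ J : Subgroup (G ⧸ A), J.FiniteIndex → J = ⊤)
    (ψ : G →* Multiplicative ℤ)
    (hψ : Subgroup.map ψ (H ⊓ A) ≠ ⊥)
    (hH : Subgroup.map (QuotientGroup.mk' A) H = ⊤) :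
    Subgroup.map (QuotientGroup.mk' A) (ψ.ker ⊓ H) = ⊤ := by
  have := finiteIndex_of_ne_bot_multiplicative_int hψ
  have := finiteIndex_comap ψ ((H ⊓ A).map ψ)
  have hHA : (H ⊓ A).map (QuotientGroup.mk' A) = ⊥ := by
    rw [Subgroup.map_eq_bot_iff, QuotientGroup.ker_mk']
    exact inf_le_right
  refine top_le_iff.mp ?_
  calc ⊤ = (((H ⊓ A).map ψ).comap ψ ⊓ H).map (QuotientGroup.mk' A) :=
        (map_inf_eq_top_of_finiteIndex _ hGA hH _).symm
    _ ≤ ((H ⊓ A) ⊔ (ψ.ker ⊓ H)).map (QuotientGroup.mk' A) :=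
        map_mono (comap_map_inf_le ψ inf_le_left)
    _ = (ψ.ker ⊓ H).map (QuotientGroup.mk' A) := by rw [Subgroup.map_sup, hHA, bot_sup_eq]
end

section
/- Let p : X̃ → X be a covering of path-connected spaces with X̃ simply connected, let G = π₁(X, x₀) act on X̃ by deck transformations, let S ⊆ X be a path-connected subspace with induced image subgroup Σ ≤ G under the inclusion, and let H ≤ G correspond to a connected cover p_H : X̄ → X. Then the path components of p_H⁻¹(S) are in bijective correspondence with the set of double cosets H \ G / Σ. -/
/-!
Send `g ∈ G` to the path component of `ψ (g • xt)` in `q⁻¹(S)`. Lifting paths through `ψ`, two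
such points are joined over `S` in `X̄` iff `g₁ • xt` and `h • g₂ • xt` are joined over `S` in `X̃`
for some `h ∈ H`, i.e. iff `(h g₂)⁻¹ g₁ ∈ Σ`: this is the double coset relation. Lifting through
`p` paths in `S` ending at `x₀` shows that every component of `q⁻¹(S)` is reached.
-/

open Set

theorem DoubleCoset.setoid_iff_exists_inv_mul_mem {G : Type*} [Group G] {H K : Subgroup G}
    {a b : G} : setoid (H : Set G) K a b ↔ ∃ h ∈ H, (h * b)⁻¹ * a ∈ K := by
  rw [(setoid _ _).comm', rel_iff]
  constructor
  · rintro ⟨h, hh, k, hk, rfl⟩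
    exact ⟨h, hh, by simpa [mul_assoc] using hk⟩
  · rintro ⟨h, hh, hk⟩
    exact ⟨h, hh, _, hk, (mul_inv_cancel_left (h * b) a).symm⟩

theorem ZerothHomotopy.mk_eq_mk_iff_joinedIn {X : Type*} [TopologicalSpace X] {F : Set X}
    {x y : X} (hx : x ∈ F) (hy : y ∈ F) :
    ZerothHomotopy.mk (⟨x, hx⟩ : F) = ZerothHomotopy.mk ⟨y, hy⟩ ↔ JoinedIn F x y :=
  Quotient.eq.trans (joinedIn_iff_joined hx hy).symm

theorem JoinedIn.map_of_mapsTo {X Y : Type*} [TopologicalSpace X] [TopologicalSpace Y]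
    {F : Set X} {F' : Set Y} {x y : X} (h : JoinedIn F x y) {f : X → Y} (hf : Continuous f)
    (hF : MapsTo f F F') : JoinedIn F' (f x) (f y) :=
  (h.map hf).mono hF.image_subset

namespace IsCoveringMap

variable {E X : Type*} [TopologicalSpace E] [TopologicalSpace X] {p : E → X}

theorem exists_joinedIn_preimage (hp : IsCoveringMap p) {S : Set X} {x y : X}
    (hxy : JoinedIn S x y) {e : E} (he : p e = x) :
    ∃ e', p e' = y ∧ JoinedIn (p ⁻¹' S) e e' := by
  obtain ⟨γ, hγ⟩ := hxy
  obtain ⟨Γ, hΓ, hΓ0⟩ := hp.exists_path_lifts γ.toContinuousMap e (by simp [he])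
  have hpΓ (t : unitInterval) : p (Γ t) = γ t := congrFun hΓ t
  exact ⟨Γ 1, by simp [hpΓ], ⟨Γ, hΓ0, rfl⟩, fun t => by simp [hpΓ, hγ t]⟩

variable {G : Type*} [Group G] [MulAction G E]

theorem exists_joinedIn_preimage_smul (hp : IsCoveringMap p) {e₀ : E}
    (horbit : ∀ e, p e = p e₀ → ∃ g : G, g • e₀ = e) {S : Set X} (hS : IsPathConnected S)
    (he₀ : p e₀ ∈ S) {e : E} (he : p e ∈ S) : ∃ g : G, JoinedIn (p ⁻¹' S) e (g • e₀) := by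
  obtain ⟨e', he', hee'⟩ := hp.exists_joinedIn_preimage (hS.joinedIn _ he _ he₀) rfl
  obtain ⟨g, rfl⟩ := horbit e' he'
  exact ⟨g, hee'⟩

theorem joinedIn_iff_exists_joinedIn_smul {B : Type*} [TopologicalSpace B] {ψ : E → B}
    (hψ : IsCoveringMap ψ) {H : Subgroup G} (hψH : ∀ x y : E, ψ x = ψ y ↔ ∃ h ∈ H, h • x = y)
    {T : Set B} {x y : E} :
    JoinedIn T (ψ x) (ψ y) ↔ ∃ h ∈ H, JoinedIn (ψ ⁻¹' T) x (h • y) := by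
  constructor
  · intro hxy
    obtain ⟨e', he', hxe'⟩ := hψ.exists_joinedIn_preimage hxy rfl
    obtain ⟨h, hh, rfl⟩ := (hψH y e').1 he'.symm
    exact ⟨h, hh, hxe'⟩
  · rintro ⟨h, hh, hxy⟩
    rw [(hψH y (h • y)).2 ⟨h, hh, rfl⟩]
    exact hxy.map_of_mapsTo hψ.continuous (mapsTo_preimage ψ T)

end IsCoveringMap

section DeckAction

variable {E X G : Type*} [TopologicalSpace E] [Group G] [MulAction G E]
  [ContinuousConstSMul G E] {p : E → X}

theorem joinedIn_preimage_smul_iff (hdeck : ∀ (g : G) (e : E), p (g • e) = p e) (g : G)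
    {S : Set X} {a b : E} :
    JoinedIn (p ⁻¹' S) (g • a) (g • b) ↔ JoinedIn (p ⁻¹' S) a b := by
  have key (g : G) {a b : E} (h : JoinedIn (p ⁻¹' S) a b) :
      JoinedIn (p ⁻¹' S) (g • a) (g • b) :=
    h.map_of_mapsTo (continuous_const_smul g) fun e he => by simpa [mem_preimage, hdeck] using he
  exact ⟨fun h => by simpa using key g⁻¹ h, key g⟩

theorem joinedIn_preimage_smul_smul_iff (hdeck : ∀ (g : G) (e : E), p (g • e) = p e)
    {S : Set X} {e₀ : E} {Sg : Subgroup G}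
    (hSg : ∀ g : G, g ∈ Sg ↔ JoinedIn (p ⁻¹' S) (g • e₀) e₀) (a b : G) :
    JoinedIn (p ⁻¹' S) (a • e₀) (b • e₀) ↔ b⁻¹ * a ∈ Sg := by
  rw [hSg, ← joinedIn_preimage_smul_iff hdeck b⁻¹, smul_smul, inv_smul_smul]

end DeckAction

theorem stmt12_general {X Xt Xb : Type u} [TopologicalSpace X] [TopologicalSpace Xt]
    [TopologicalSpace Xb]
    {G : Type u} [Group G] [MulAction G Xt] [ContinuousConstSMul G Xt]
    (p : Xt → X) (hp : IsCoveringMap p)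
    (hdeck : ∀ (g : G) (x : Xt), p (g • x) = p x)
    (htrans : ∀ x y : Xt, p x = p y → ∃! g : G, g • x = y)
    (x0 : X) (xt : Xt) (hxt : p xt = x0)
    (S : Set X) (hS : IsPathConnected S) (hx0S : x0 ∈ S)
    (Sg : Subgroup G)
    (hSg : ∀ g : G, g ∈ Sg ↔ JoinedIn (p ⁻¹' S) (g • xt) xt)
    (H : Subgroup G)
    (ψ : Xt → Xb) (hψ : IsCoveringMap ψ) (hψs : Function.Surjective ψ)
    (q : Xb → X) (hqψ : ∀ x, q (ψ x) = p x)
    (hψH : ∀ x y : Xt, ψ x = ψ y ↔ ∃ h ∈ H, h • x = y) :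
    Nonempty (ZerothHomotopy (q ⁻¹' S) ≃ DoubleCoset.Quotient (H : Set G) (Sg : Set G)) := by
  have hpre : ψ ⁻¹' (q ⁻¹' S) = p ⁻¹' S := by ext; simp [hqψ]
  have hmem (g : G) : ψ (g • xt) ∈ q ⁻¹' S := by simp [hqψ, hdeck, hxt, hx0S]
  let Φ (g : G) : ZerothHomotopy (q ⁻¹' S) := .mk ⟨ψ (g • xt), hmem g⟩
  have hΦ (a b : G) : DoubleCoset.setoid (H : Set G) Sg a b ↔ Φ a = Φ b := by
    rw [DoubleCoset.setoid_iff_exists_inv_mul_mem, ZerothHomotopy.mk_eq_mk_iff_joinedIn,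
      hψ.joinedIn_iff_exists_joinedIn_smul hψH, hpre]
    simp only [smul_smul, joinedIn_preimage_smul_smul_iff hdeck hSg]
  have hΦs : Function.Surjective Φ := by
    intro z
    induction z with | mk b => ?_
    obtain ⟨b, hb⟩ := b
    obtain ⟨e, rfl⟩ := hψs b
    have he : p e ∈ S := by simpa [hqψ] using hb
    obtain ⟨g, hg⟩ := hp.exists_joinedIn_preimage_smul (fun e h => (htrans xt e h.symm).exists)
      hS (hxt ▸ hx0S) he
    refine ⟨g, (ZerothHomotopy.mk_eq_mk_iff_joinedIn _ _).2 ?_⟩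
    rw [← hpre] at hg
    exact (hg.map_of_mapsTo hψ.continuous (mapsTo_preimage ψ _)).symm
  exact ⟨((Quotient.congrRight hΦ).trans (Setoid.quotientKerEquivOfSurjective Φ hΦs)).symm⟩

/-- Let `p : X̃ → X` be a universal cover with deck group `G` acting simply
transitively on fibers, `S ⊆ X` a path-connected subset containing the base
point, `Σ ≤ G` the subgroup corresponding to the image of `π₁(S)` (characterized
by joinability inside `p⁻¹(S)`), and `p_H = q : X̄ → X` the connected cover
associated to a subgroup `H ≤ G` (obtained as quotient `ψ : X̃ → X̄` by the
`H`-action). Then the path components of `q⁻¹(S)` are in bijection with the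
double cosets `H \ G / Σ`. -/
theorem stmt12 {X Xt Xb : Type u} [TopologicalSpace X] [TopologicalSpace Xt]
    [TopologicalSpace Xb]
    [PathConnectedSpace X] [PathConnectedSpace Xt] [SimplyConnectedSpace Xt]
    {G : Type u} [Group G] [MulAction G Xt] [ContinuousConstSMul G Xt]
    (p : Xt → X) (hp : IsCoveringMap p)
    (hdeck : ∀ (g : G) (x : Xt), p (g • x) = p x)
    (htrans : ∀ x y : Xt, p x = p y → ∃! g : G, g • x = y)
    (x0 : X) (xt : Xt) (hxt : p xt = x0)
    (S : Set X) (hS : IsPathConnected S) (hx0S : x0 ∈ S)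
    (Sg : Subgroup G)
    (hSg : ∀ g : G, g ∈ Sg ↔ JoinedIn (p ⁻¹' S) (g • xt) xt)
    (H : Subgroup G)
    (ψ : Xt → Xb) (hψ : IsCoveringMap ψ) (hψs : Function.Surjective ψ)
    (q : Xb → X) (hq : IsCoveringMap q) (hqψ : ∀ x, q (ψ x) = p x)
    (hψH : ∀ x y : Xt, ψ x = ψ y ↔ ∃ h ∈ H, h • x = y) :
    Nonempty (ZerothHomotopy (q ⁻¹' S) ≃ DoubleCoset.Quotient (H : Set G) (Sg : Set G)) :=
  stmt12_general p hp hdeck htrans x0 xt hxt S hS hx0S Sg hSg H ψ hψ hψs q hqψ hψH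
end

section
/- Let φ : G → A × K be a group homomorphism where A is a finitely generated abelian group and K is any group, let pr_K : A × K → K and pr_A : A × K → A be the projections, and suppose H ≤ G satisfies: pr_K ∘ φ restricted to H is surjective onto K, K has no proper finite-index subgroups, and the kernel F of pr_K ∘ φ|_H satisfies pr_A(φ(F)) = 0. Then pr_A(φ(H)) = 0, i.e. φ(H) is contained in 0 × K. -/
/-!
Since `pr_K ∘ φ` maps `H` onto `K` with kernel inside the kernel of `pr_A ∘ φ`, the latter
factors through a homomorphism `K → A`. Finitely generated abelian groups are residually finite
(by the structure theorem), so a nontrivial image of some `k ∈ K` would survive in a finite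
quotient of `A`, and its preimage would be a proper finite-index subgroup of `K`.
-/

namespace Group

variable {G G' : Type*} [Group G] [Group G']

theorem exists_finiteIndex_notMem_of_map_ne_one [ResiduallyFinite G'] (f : G →* G') {g : G}
    (hg : f g ≠ 1) : ∃ H : Subgroup G, H.FiniteIndex ∧ g ∉ H := by
  obtain ⟨N, hN⟩ := exists_finiteIndexNormalSubgroup_notMem (f g) hg
  exact ⟨((QuotientGroup.mk' N.toSubgroup).comp f).ker, Subgroup.finiteIndex_ker _,
    by simpa [FiniteIndexNormalSubgroup.mem_toSubgroup_iff] using hN⟩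

theorem ResiduallyFinite.of_injective [ResiduallyFinite G'] {f : G →* G'}
    (hf : Function.Injective f) : ResiduallyFinite G :=
  residuallyFinite_iff_exists_finiteIndex.mpr fun _ hg ↦
    exists_finiteIndex_notMem_of_map_ne_one f ((map_ne_one_iff f hf).mpr hg)

instance {ι : Type*} {G : ι → Type*} [∀ i, Group (G i)] [∀ i, ResiduallyFinite (G i)] :
    ResiduallyFinite (∀ i, G i) :=
  residuallyFinite_iff_exists_finiteIndex.mpr fun g hg ↦ by
    obtain ⟨i, hi⟩ := Function.ne_iff.mp hg
    exact exists_finiteIndex_notMem_of_map_ne_one (Pi.evalMonoidHom G i) hi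

instance : ResiduallyFinite (Multiplicative ℤ) :=
  residuallyFinite_iff_exists_finiteIndex.mpr fun n hn ↦ by
    -- reduction modulo `|n| + 1` does not kill `n`
    let m := n.toAdd.natAbs + 1
    refine exists_finiteIndex_notMem_of_map_ne_one
      (Int.castAddHom (ZMod m)).toMultiplicative fun h ↦ hn ?_
    have hdvd : (m : ℤ) ∣ n.toAdd := (ZMod.intCast_zmod_eq_zero_iff_dvd _ m).mp h
    exact toAdd_eq_zero.mp
      (Int.eq_zero_of_dvd_of_natAbs_lt_natAbs hdvd (by rw [Int.natAbs_natCast]; omega))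

instance (A : Type*) [CommGroup A] [FG A] : ResiduallyFinite A := by
  obtain ⟨ι, j, _, _, p, hp, e, ⟨eqv⟩⟩ := CommGroup.equiv_free_prod_prod_multiplicative_zmod A
  have (i : ι) : NeZero (p i ^ e i) := ⟨pow_ne_zero _ (hp i).ne_zero⟩
  exact .of_injective (f := eqv.toMonoidHom) eqv.injective

end Group

namespace MonoidHom

variable {H K A : Type*} [Group H] [Group K] [Group A] [Group.ResiduallyFinite A]

theorem eq_one_of_forall_finiteIndex_eq_top (hK : ∀ J : Subgroup K, J.FiniteIndex → J = ⊤)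
    (f : K →* A) : f = 1 := by
  ext k
  by_contra hk
  obtain ⟨J, hJ, hkJ⟩ := Group.exists_finiteIndex_notMem_of_map_ne_one f hk
  exact hkJ (hK J hJ ▸ Subgroup.mem_top k)

theorem eq_one_of_ker_le_of_surjective (hK : ∀ J : Subgroup K, J.FiniteIndex → J = ⊤)
    {ψ : H →* K} (hψ : Function.Surjective ψ) {α : H →* A} (hker : ψ.ker ≤ α.ker) : α = 1 := by
  calc α = (ψ.liftOfSurjective hψ ⟨α, hker⟩).comp ψ :=
        (ψ.liftOfRightInverse_comp _ (Function.rightInverse_surjInv hψ) ⟨α, hker⟩).symm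
    _ = 1 := by rw [eq_one_of_forall_finiteIndex_eq_top hK (ψ.liftOfSurjective hψ _), one_comp]

end MonoidHom

/-- Let `φ : G → A × K` with `A` finitely generated abelian and `K` without
proper finite-index subgroups. If `H ≤ G` maps onto `K` under `pr_K ∘ φ` and
the kernel `F` of this map on `H` satisfies `pr_A(φ(F)) = 1`, then
`pr_A(φ(H)) = 1`, i.e. `φ(H) ⊆ 1 × K`. -/
theorem stmt18 {G A K : Type*} [Group G] [CommGroup A] [Group.FG A] [Group K]
    (φ : G →* A × K)
    (hK : ∀ J : Subgroup K, J.FiniteIndex → J = ⊤)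
    (H : Subgroup G)
    (hsurj : ∀ k : K, ∃ h ∈ H, (φ h).2 = k)
    (hF : ∀ g ∈ H, (φ g).2 = 1 → (φ g).1 = 1) :
    ∀ g ∈ H, (φ g).1 = 1 := by
  let ψ : H →* K := (MonoidHom.snd A K).comp (φ.comp H.subtype)
  let α : H →* A := (MonoidHom.fst A K).comp (φ.comp H.subtype)
  have hψ : Function.Surjective ψ := fun k ↦
    let ⟨h, hH, hk⟩ := hsurj k
    ⟨⟨h, hH⟩, hk⟩
  have hα : α = 1 := MonoidHom.eq_one_of_ker_le_of_surjective hK hψ fun h hh ↦ hF h h.2 hh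
  exact fun g hg ↦ DFunLike.congr_fun hα (⟨g, hg⟩ : H)
end
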